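/- arXiv:math/0405417 — 5 statements merged into one kernel-verified Lean document; each statement's English description precedes it below -/
import Mathlib

section
/- Let E be a finite-dimensional real inner product space, s ≥ 1, ℓ₁,…,ℓ_s : E → ℝ continuous linear functionals, and f : E → ℝ defined by f(x) = max_{1≤i≤s} ℓᵢ(x). If there exists u ∈ E with ‖u‖ = 1 and f(u) < 0, then f attains a minimum on the unit sphere {x ∈ E : ‖x‖ = 1}, and the minimizer is unique: there is exactly one h ∈ E with ‖h‖ = 1 such that f(h) ≤ f(x) for all x with ‖x‖ = 1. -/
/-- Let `E` be a finite-dimensional real inner product space, `s ≥ 1`,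
`ℓ₁,…,ℓ_s : E → ℝ` continuous linear functionals and `f x = max_{1 ≤ i ≤ s} ℓᵢ x`.
If there is `u` with `‖u‖ = 1` and `f u < 0`, then `f` attains a minimum on the unit
sphere and the minimizer is unique. -/
theorem stmt_0 {E : Type*} [NormedAddCommGroup E] [InnerProductSpace ℝ E]
    [FiniteDimensional ℝ E] {s : ℕ} (hs : 1 ≤ s) (ℓ : Fin s → E →L[ℝ] ℝ)
    (f : E → ℝ)
    (hf : ∀ x, f x = Finset.univ.sup' ⟨⟨0, hs⟩, Finset.mem_univ _⟩ fun i => ℓ i x)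
    (u : E) (hu : ‖u‖ = 1) (hfu : f u < 0) :
    ∃! h : E, ‖h‖ = 1 ∧ ∀ x : E, ‖x‖ = 1 → f h ≤ f x := by
  have hne : (Finset.univ : Finset (Fin s)).Nonempty := ⟨⟨0, hs⟩, Finset.mem_univ _⟩
  -- basic properties of f
  have hle : ∀ (i : Fin s) (x : E), ℓ i x ≤ f x := fun i x => by
    rw [hf]; exact Finset.le_sup' (fun j => ℓ j x) (Finset.mem_univ i)
  have hsup : ∀ (x : E) (c : ℝ), (∀ i : Fin s, ℓ i x ≤ c) → f x ≤ c := fun x c h => by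
    rw [hf]; exact Finset.sup'_le _ _ fun i _ => h i
  have hderiv : ∀ (c : ℝ), 0 ≤ c → ∀ x, f (c • x) = c * f x := by
    intro c hc x
    refine le_antisymm ?_ ?_
    · apply hsup
      intro i
      have : ℓ i (c • x) = c * ℓ i x := by simp
      rw [this]
      exact mul_le_mul_of_nonneg_left (hle i x) hc
    · obtain ⟨i, _, hi⟩ := Finset.exists_mem_eq_sup' hne fun i => ℓ i x
      have hfx : f x = ℓ i x := by rw [hf]; exact hi
      have : c * f x = ℓ i (c • x) := by rw [hfx]; simp
      rw [this]
      exact hle i (c • x)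
  -- continuity
  have hcont : Continuous f := by
    have : Continuous fun x => Finset.univ.sup' hne fun i => ℓ i x :=
      Continuous.finset_sup'_apply hne fun i _ => (ℓ i).continuous
    have hfeq : f = fun x => Finset.univ.sup' hne fun i => ℓ i x := funext hf
    rwa [hfeq]
  -- existence
  have hcompact : IsCompact {x : E | ‖x‖ = 1} := by
    have : {x : E | ‖x‖ = 1} = Metric.sphere (0 : E) 1 := by
      ext x; simp [Metric.mem_sphere, dist_eq_norm]
    rw [this]
    exact isCompact_sphere 0 1
  obtain ⟨h, hhmem, hhmin⟩ :=
    hcompact.exists_isMinOn ⟨u, hu⟩ hcont.continuousOn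
  have hmin : ∀ x : E, ‖x‖ = 1 → f h ≤ f x := fun x hx => hhmin hx
  refine ⟨h, ⟨hhmem, hmin⟩, ?_⟩
  -- uniqueness
  rintro g ⟨hg1, hgmin⟩
  by_contra hne'
  have hfh : f h < 0 := lt_of_le_of_lt (hmin u hu) hfu
  have hfeq : f g = f h := le_antisymm (hgmin h hhmem) (hmin g hg1)
  -- midpoint
  set z : E := (1/2 : ℝ) • (g + h) with hz
  -- f z ≤ f h
  have hfz : f z ≤ f h := by
    apply hsup
    intro i
    have : ℓ i z = (1/2 : ℝ) * (ℓ i g + ℓ i h) := by simp [hz, mul_add]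
    rw [this]
    have := add_le_add (hle i g) (hle i h)
    nlinarith [hle i g, hle i h, hfeq]
  -- z ≠ 0
  have hz0 : z ≠ 0 := by
    intro h0
    rw [h0] at hfz
    have : f (0 : E) = 0 := by
      have := hderiv 0 le_rfl 0
      simpa using this
    linarith
  -- ‖z‖ < 1 by strict convexity
  have hzlt : ‖z‖ < 1 := by
    have hinner : (inner ℝ g h : ℝ) < 1 := by
      rcases lt_or_eq_of_le (real_inner_le_norm g h) with hlt | heq
      · rw [hg1, hhmem] at hlt; simpa using hlt
      · exfalso
        have : (inner ℝ g h : ℝ) = 1 := by rw [heq, hg1, hhmem]; ring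
        exact hne' ((inner_eq_one_iff_of_norm_eq_one hg1 hhmem).mp this)
    have hnsq : ‖g + h‖ ^ 2 < 4 := by
      rw [← real_inner_self_eq_norm_sq]
      rw [inner_add_add_self]
      have h1 : (inner ℝ g g : ℝ) = 1 := by
        rw [real_inner_self_eq_norm_sq, hg1]; norm_num
      have h2 : (inner ℝ h h : ℝ) = 1 := by
        rw [real_inner_self_eq_norm_sq, hhmem]; norm_num
      have h3 : (inner ℝ h g : ℝ) = inner ℝ g h := real_inner_comm g h
      linarith
    have hn : ‖g + h‖ < 2 := by
      nlinarith [norm_nonneg (g + h)]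
    have : ‖z‖ = (1/2 : ℝ) * ‖g + h‖ := by
      rw [hz, norm_smul]; simp
    rw [this]; linarith
  -- rescale
  set c : ℝ := ‖z‖⁻¹ with hc
  have hzpos : 0 < ‖z‖ := norm_pos_iff.mpr hz0
  have hcpos : 0 < c := inv_pos.mpr hzpos
  have hw1 : ‖c • z‖ = 1 := by
    rw [norm_smul, hc, Real.norm_eq_abs, abs_of_pos (inv_pos.mpr hzpos)]
    exact inv_mul_cancel₀ hzpos.ne'
  have hfw : f (c • z) = c * f z := hderiv c hcpos.le z
  have hclt : 1 < c := by
    rw [hc]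
    exact (one_lt_inv_iff₀).mpr ⟨hzpos, hzlt⟩
  have hfzneg : f z < 0 := lt_of_le_of_lt hfz hfh
  have : f (c • z) < f h := by
    rw [hfw]
    calc c * f z ≤ c * f h := by nlinarith
    _ < f h := by nlinarith
  exact absurd (hmin _ hw1) (not_le.mpr this)
end

section
/- Equip ℝⁿ (n ≥ 1) with the standard inner product, let s ≥ 1 and let ℓ₁,…,ℓ_s : ℝⁿ → ℝ be linear functionals with rational coefficients, i.e. ℓᵢ(x) = Σ_{j=1}^n c_{ij} x_j with all c_{ij} ∈ ℚ. Set f(x) = max_{1≤i≤s} ℓᵢ(x). If there exists u with ‖u‖ = 1 and f(u) < 0, then the unique minimizer h of f on the unit sphere lies on a rational ray: there exist a real number t > 0 and a nonzero vector q ∈ ℚⁿ with h = t·q; in particular the ray ℝ_{>0}·h contains rational and integral points. -/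
open Finset

lemma rat_solve {ι : Type*} [Fintype ι] [DecidableEq ι] (G : ι → ι → ℚ) (v : ι → ℚ)
    (μ : ι → ℝ) (hμ : ∀ i, ∑ j, (G i j : ℝ) * μ j = (v i : ℝ)) :
    ∃ ν : ι → ℚ, ∀ i, ∑ j, G i j * ν j = v i := by
  set T : (ι → ℚ) →ₗ[ℚ] (ι → ℚ) := (Matrix.of G).mulVecLin with hT
  by_cases hv : v ∈ LinearMap.range T
  · obtain ⟨ν, hν⟩ := hv
    exact ⟨ν, fun i => by
      have := congrFun hν i
      simpa [hT, Matrix.mulVecLin_apply, Matrix.mulVec, dotProduct] using this⟩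
  · exfalso
    obtain ⟨φ, hφv, hφ0⟩ := (LinearMap.range T).exists_dual_map_eq_bot_of_notMem hv
      (by infer_instance)
    set w : ι → ℚ := fun i => φ (fun j => if i = j then 1 else 0) with hw
    have hφx : ∀ x : ι → ℚ, φ x = ∑ i, x i * w i := by
      intro x
      rw [LinearMap.pi_apply_eq_sum_univ φ x]
      simp [hw, smul_eq_mul]
    -- columns of G are in range T, so killed by φ
    have hcol : ∀ j, ∑ i, G i j * w i = 0 := by
      intro j
      have hmem : (fun i => G i j) ∈ LinearMap.range T := by
        refine ⟨fun k => if j = k then 1 else 0, ?_⟩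
        funext i
        simp [hT, Matrix.mulVecLin_apply, Matrix.mulVec, dotProduct]
      have : φ (fun i => G i j) = 0 := by
        have := hφ0 ▸ Submodule.mem_map_of_mem (f := φ) hmem
        simpa using this
      rwa [hφx] at this
    have hφvne : φ v ≠ 0 := hφv
    have hsum : (∑ i, v i * w i : ℚ) ≠ 0 := by rwa [hφx] at hφvne
    -- now cast to ℝ and get contradiction
    have : ((∑ i, v i * w i : ℚ) : ℝ) = 0 := by
      push_cast
      calc ∑ i, (v i : ℝ) * (w i : ℝ)
          = ∑ i, (∑ j, (G i j : ℝ) * μ j) * (w i : ℝ) := by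
            refine Finset.sum_congr rfl fun i _ => by rw [hμ i]
        _ = ∑ j, μ j * ∑ i, (G i j : ℝ) * (w i : ℝ) := by
            simp_rw [Finset.sum_mul, Finset.mul_sum]
            rw [Finset.sum_comm]
            exact Finset.sum_congr rfl fun j _ => Finset.sum_congr rfl fun i _ => by ring
        _ = 0 := by
            refine Finset.sum_eq_zero fun j _ => ?_
            have := hcol j
            have : ((∑ i, G i j * w i : ℚ) : ℝ) = 0 := by rw [this]; norm_num
            push_cast at this
            rw [this, mul_zero]
    exact hsum (by exact_mod_cast this)


open RealInnerProductSpace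

/-- On `ℝⁿ` with the standard inner product, let `ℓ₁,…,ℓ_s` be linear
functionals with rational coefficients and `f x = max_{1 ≤ i ≤ s} ℓᵢ x`. If `f` takes a
negative value on the unit sphere, then the (unique) minimizer `h` of `f` on the unit
sphere lies on a rational ray: `h = t • q` for some real `t > 0` and nonzero `q ∈ ℚⁿ`. -/
theorem stmt_1 {n s : ℕ} (hn : 1 ≤ n) (hs : 1 ≤ s)
    (c : Fin s → Fin n → ℚ)
    (ℓ : Fin s → EuclideanSpace ℝ (Fin n) → ℝ)
    (hℓ : ∀ i x, ℓ i x = ∑ j, (c i j : ℝ) * x j)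
    (f : EuclideanSpace ℝ (Fin n) → ℝ)
    (hf : ∀ x, f x = Finset.univ.sup' ⟨⟨0, hs⟩, Finset.mem_univ _⟩ fun i => ℓ i x)
    (u : EuclideanSpace ℝ (Fin n)) (hu : ‖u‖ = 1) (hfu : f u < 0)
    (h : EuclideanSpace ℝ (Fin n)) (hh : ‖h‖ = 1)
    (hmin : ∀ x : EuclideanSpace ℝ (Fin n), ‖x‖ = 1 → f h ≤ f x) :
    ∃ (t : ℝ) (q : Fin n → ℚ), 0 < t ∧ q ≠ 0 ∧ ∀ j, h j = t * (q j : ℝ) := by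
  classical
  set a : Fin s → EuclideanSpace ℝ (Fin n) := fun i => WithLp.toLp 2 (fun j => (c i j : ℝ)) with ha
  have hinner : ∀ i x, ℓ i x = ⟪a i, x⟫ := by
    intro i x
    rw [hℓ, PiLp.inner_apply]
    simp [ha, mul_comm]
  have hℓ0 : ∀ i, ℓ i 0 = 0 := by
    intro i; rw [hinner, inner_zero_right]
  have hℓsmul : ∀ i (r : ℝ) x, ℓ i (r • x) = r * ℓ i x := by
    intro i r x; rw [hinner, hinner, real_inner_smul_right]
  have i₀ : Fin s := ⟨0, hs⟩
  have hfle : ∀ x i, ℓ i x ≤ f x := by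
    intro x i; rw [hf]; exact Finset.le_sup' (fun i => ℓ i x) (Finset.mem_univ i)
  have hfle' : ∀ (x) (b : ℝ), (∀ i, ℓ i x ≤ b) → f x ≤ b := by
    intro x b hb; rw [hf]; exact Finset.sup'_le _ _ fun i _ => hb i
  set m := f h with hm
  have hmneg : m < 0 := lt_of_le_of_lt (hmin u hu) hfu
  have hm0 : 0 < -m := by linarith
  obtain ⟨p, hp⟩ : ∃ p : EuclideanSpace ℝ (Fin n), p = (-m)⁻¹ • h := ⟨_, rfl⟩
  have hhp : h = (-m) • p := by
    rw [hp, smul_smul, mul_inv_cancel₀ (ne_of_gt hm0), one_smul]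
  have hpnorm : ‖p‖ = (-m)⁻¹ := by
    rw [hp, norm_smul, hh, Real.norm_eq_abs, abs_of_pos (by positivity), mul_one]
  have hℓph : ∀ i, ℓ i p = (-m)⁻¹ * ℓ i h := by
    intro i; rw [hp, hℓsmul]
  have hpc : ∀ i, ℓ i p ≤ -1 := by
    intro i
    rw [hℓph]
    have h1 : ℓ i h ≤ m := hfle h i
    have h2 : (-m)⁻¹ * ℓ i h ≤ (-m)⁻¹ * m :=
      mul_le_mul_of_nonneg_left h1 (by positivity)
    have h3 : (-m)⁻¹ * m = -1 := by rw [inv_neg, neg_mul, inv_mul_cancel₀ hmneg.ne]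
    linarith
  have hminnorm : ∀ x : EuclideanSpace ℝ (Fin n), (∀ i, ℓ i x ≤ -1) → ‖p‖ ≤ ‖x‖ := by
    intro x hx
    have hx0 : x ≠ 0 := by
      intro h0
      have := hx i₀
      rw [h0, hℓ0] at this; linarith
    have hr : 0 < ‖x‖ := norm_pos_iff.mpr hx0
    have hnx : ‖(‖x‖⁻¹ • x)‖ = 1 := by
      rw [norm_smul, Real.norm_eq_abs, abs_of_pos (by positivity),
        inv_mul_cancel₀ hr.ne']
    have h1 : f (‖x‖⁻¹ • x) ≤ -‖x‖⁻¹ := by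
      refine hfle' _ _ fun i => ?_
      rw [hℓsmul]
      have := mul_le_mul_of_nonneg_left (hx i) (inv_nonneg.mpr hr.le)
      linarith
    have h2 : m ≤ -‖x‖⁻¹ := (hmin _ hnx).trans h1
    have h3 : 1 ≤ (-m) * ‖x‖ := by
      have := mul_le_mul_of_nonneg_right h2 hr.le
      rw [neg_mul, inv_mul_cancel₀ hr.ne'] at this
      linarith
    rw [hpnorm]
    rw [inv_le_iff_one_le_mul₀ hm0]
    linarith [h3]
  -- the active index set
  let ι := {i : Fin s // ℓ i p = -1}
  set W : Submodule ℝ (EuclideanSpace ℝ (Fin n)) :=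
    Submodule.span ℝ (Set.range fun i : ι => a i.1) with hW
  have hpW : p ∈ W := by
    rw [← Submodule.orthogonal_orthogonal W, Submodule.mem_orthogonal]
    intro d hd
    have hdi : ∀ i : Fin s, ℓ i p = -1 → ⟪a i, d⟫ = 0 := by
      intro i hi
      exact (Submodule.mem_orthogonal W d).mp hd _
        (Submodule.subset_span ⟨⟨i, hi⟩, rfl⟩)
    by_cases hd0 : d = 0
    · simp [hd0]
    · have hdn : 0 < ‖d‖ := norm_pos_iff.mpr hd0
      set ε₀ : ℝ := Finset.univ.inf' (show Finset.univ.Nonempty from ⟨i₀, Finset.mem_univ _⟩)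
        (fun i => if ⟪a i, d⟫ = 0 then 1 else (-1 - ℓ i p) / |⟪a i, d⟫|) with hε₀
      have hε₀pos : 0 < ε₀ := by
        rw [hε₀, Finset.lt_inf'_iff]
        intro i _
        by_cases hc : ⟪a i, d⟫ = 0
        · simp [hc]
        · have hact : ℓ i p < -1 := by
            rcases lt_or_eq_of_le (hpc i) with h' | h'
            · exact h'
            · exact absurd (hdi i h') hc
          simp only [hc, if_false]
          exact div_pos (by linarith) (abs_pos.mpr hc)
      have hexp : ∀ (i : Fin s) (ε : ℝ), ℓ i (p + ε • d) = ℓ i p + ε * ⟪a i, d⟫ := by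
        intro i ε
        rw [hinner i (p + ε • d), inner_add_right, real_inner_smul_right, ← hinner]
      have key : ∀ ε : ℝ, |ε| ≤ ε₀ → ∀ i, ℓ i (p + ε • d) ≤ -1 := by
        intro ε hε i
        rw [hexp]
        by_cases hc : ⟪a i, d⟫ = 0
        · rw [hc, mul_zero, add_zero]; exact hpc i
        · have h1 : ε₀ ≤ (-1 - ℓ i p) / |⟪a i, d⟫| := by
            have := Finset.inf'_le
              (fun i => if ⟪a i, d⟫ = 0 then 1 else (-1 - ℓ i p) / |⟪a i, d⟫|)
              (Finset.mem_univ i)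
            rwa [if_neg hc] at this
          have habs : ε * ⟪a i, d⟫ ≤ |ε| * |⟪a i, d⟫| := by
            calc ε * ⟪a i, d⟫ ≤ |ε * ⟪a i, d⟫| := le_abs_self _
              _ = |ε| * |⟪a i, d⟫| := abs_mul _ _
          have h2 : |ε| * |⟪a i, d⟫| ≤ ((-1 - ℓ i p) / |⟪a i, d⟫|) * |⟪a i, d⟫| :=
            mul_le_mul_of_nonneg_right (le_trans hε h1) (abs_nonneg _)
          have h3 : ((-1 - ℓ i p) / |⟪a i, d⟫|) * |⟪a i, d⟫| = -1 - ℓ i p :=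
            div_mul_cancel₀ _ (abs_ne_zero.mpr hc)
          linarith
      have quad : ∀ ε : ℝ, |ε| ≤ ε₀ → 0 ≤ 2 * (ε * ⟪p, d⟫) + ε ^ 2 * ‖d‖ ^ 2 := by
        intro ε hε
        have hle : ‖p‖ ≤ ‖p + ε • d‖ := hminnorm _ (key ε hε)
        have hsq : ‖p‖ ^ 2 ≤ ‖p + ε • d‖ ^ 2 :=
          pow_le_pow_left₀ (norm_nonneg _) hle 2
        have hnexp : ‖p + ε • d‖ ^ 2 = ‖p‖ ^ 2 + 2 * (ε * ⟪p, d⟫) + ε ^ 2 * ‖d‖ ^ 2 := by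
          rw [norm_add_sq_real, real_inner_smul_right, norm_smul, mul_pow,
            Real.norm_eq_abs, sq_abs]
        rw [hnexp] at hsq
        linarith
      have hpd : ⟪p, d⟫ = 0 := by
        by_contra hcne
        have hcabs : 0 < |⟪p, d⟫| := abs_pos.mpr hcne
        have hdsq : 0 < ‖d‖ ^ 2 := by positivity
        set δ : ℝ := min (ε₀ / |⟪p, d⟫|) (1 / ‖d‖ ^ 2) with hδ
        have hδpos : 0 < δ := lt_min (by positivity) (by positivity)
        have hεabs : |(-δ * ⟪p, d⟫)| ≤ ε₀ := by
          rw [abs_mul, abs_neg, abs_of_pos hδpos]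
          have hδ1 : δ ≤ ε₀ / |⟪p, d⟫| := min_le_left _ _
          calc δ * |⟪p, d⟫| ≤ (ε₀ / |⟪p, d⟫|) * |⟪p, d⟫| :=
                mul_le_mul_of_nonneg_right hδ1 (abs_nonneg _)
            _ = ε₀ := div_mul_cancel₀ _ (ne_of_gt hcabs)
        have hq := quad _ hεabs
        have hd1 : δ * ‖d‖ ^ 2 ≤ 1 := by
          have hδ2 : δ ≤ 1 / ‖d‖ ^ 2 := min_le_right _ _
          calc δ * ‖d‖ ^ 2 ≤ (1 / ‖d‖ ^ 2) * ‖d‖ ^ 2 :=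
                mul_le_mul_of_nonneg_right hδ2 hdsq.le
            _ = 1 := one_div_mul_cancel (ne_of_gt hdsq)
        have hc2 : 0 < ⟪p, d⟫ ^ 2 := by positivity
        have hkey : (δ * ‖d‖ ^ 2) * (δ * ⟪p, d⟫ ^ 2) ≤ 1 * (δ * ⟪p, d⟫ ^ 2) :=
          mul_le_mul_of_nonneg_right hd1 (by positivity)
        nlinarith [hq, hkey, mul_pos hδpos hc2]
      rw [real_inner_comm] at hpd
      exact hpd
  obtain ⟨μ, hμ⟩ := (Submodule.mem_span_range_iff_exists_fun ℝ).mp hpW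
  set G : ι → ι → ℚ := fun i j => ∑ k, c i.1 k * c j.1 k with hG
  have hGcast : ∀ i j : ι, ((G i j : ℝ)) = ⟪a i.1, a j.1⟫ := by
    intro i j
    rw [hG, PiLp.inner_apply]
    push_cast
    simp [ha, mul_comm]
  have hsys : ∀ i : ι, ∑ j : ι, (G i j : ℝ) * μ j = ((-1 : ℚ) : ℝ) := by
    intro i
    have hstep : ∑ j : ι, (G i j : ℝ) * μ j = ⟪a i.1, ∑ j : ι, μ j • a j.1⟫ := by
      rw [inner_sum]
      refine Finset.sum_congr rfl fun j _ => ?_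
      rw [real_inner_smul_right, hGcast]; ring
    rw [hstep, hμ, ← hinner, i.2]
    norm_num
  obtain ⟨ν, hν⟩ := rat_solve G (fun _ => -1) μ hsys
  set q : Fin n → ℚ := fun k => ∑ i : ι, ν i * c i.1 k with hq
  set r : EuclideanSpace ℝ (Fin n) := ∑ i : ι, (ν i : ℝ) • a i.1 with hr
  have hrq : ∀ k, r k = (q k : ℝ) := by
    intro k
    rw [hr, hq]
    push_cast
    rw [WithLp.ofLp_sum, Finset.sum_apply]
    refine Finset.sum_congr rfl fun i _ => ?_
    simp [ha]
  have hinner_r : ∀ i : ι, ⟪a i.1, r⟫ = -1 := by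
    intro i
    rw [hr, inner_sum]
    have hstep : ∑ j : ι, ⟪a i.1, (ν j : ℝ) • a j.1⟫ = ∑ j : ι, (G i j : ℝ) * (ν j : ℝ) := by
      refine Finset.sum_congr rfl fun j _ => ?_
      rw [real_inner_smul_right, hGcast]; ring
    rw [hstep]
    have hcast : ((∑ j : ι, G i j * ν j : ℚ) : ℝ) = ((-1 : ℚ) : ℝ) := by
      rw [hν i]
    push_cast at hcast
    rw [hcast]
  have hrp : r = p := by
    have h1 : ∑ i : ι, ((ν i : ℝ) - μ i) • a i.1
        = (∑ i : ι, (ν i : ℝ) • a i.1) - ∑ i : ι, μ i • a i.1 := by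
      rw [← Finset.sum_sub_distrib]
      exact Finset.sum_congr rfl fun i _ => sub_smul _ _ _
    have hsub : r - p = ∑ i : ι, ((ν i : ℝ) - μ i) • a i.1 := by
      rw [h1, hμ, hr]
    have hzero : ∀ i : ι, ⟪a i.1, r - p⟫ = 0 := by
      intro i
      rw [inner_sub_right, hinner_r, ← hinner, i.2]
      ring
    have : ⟪r - p, r - p⟫ = 0 := by
      nth_rewrite 1 [hsub]
      rw [sum_inner]
      refine Finset.sum_eq_zero fun i _ => ?_
      rw [real_inner_smul_left, hzero, mul_zero]
    rw [inner_self_eq_zero] at this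
    exact sub_eq_zero.mp this
  refine ⟨-m, q, hm0, ?_, ?_⟩
  · intro hq0
    have hr0 : r = 0 := by
      have : ∀ k, r k = 0 := by
        intro k; rw [hrq k, congrFun hq0 k]; norm_num
      ext k; exact this k
    have hp0 : p = 0 := by rw [← hrp, hr0]
    have := hpc i₀
    rw [hp0, hℓ0] at this
    linarith
  · intro j
    rw [hhp]
    have : ((-m) • p) j = (-m) * p j := rfl
    rw [this, ← hrp, hrq j]
end

section
/- Let N ≥ 1, let w₁,…,w_N be positive integers, and let ℂˣ act on ℂ^N by z • x = (z^{w₁}x₁, …, z^{w_N}x_N). If C ⊆ ℂ^N is Zariski closed and 0 ∉ C, then for every w₀ ∈ ℂ^N the set {z ∈ ℂˣ : z • w₀ ∈ C} is finite. -/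
/-! Pick a defining polynomial `p` of `C` with `p(0) ≠ 0`. Restricting `p` to the weighted orbit
`z ↦ (z^{w₁}x₁, …, z^{w_N}x_N)` gives a one-variable polynomial whose value at `z = 0` is `p(0)`,
because all weights are positive. Hence it is nonzero and has only finitely many roots. -/

/-- A subset of `ℂ^N` is Zariski closed if it is the common zero set of a family of
polynomials. -/
def IsZariskiClosed {N : ℕ} (C : Set (Fin N → ℂ)) : Prop :=
  ∃ S : Set (MvPolynomial (Fin N) ℂ),
    C = {x | ∀ p ∈ S, MvPolynomial.eval x p = 0}

namespace MvPolynomial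

variable {σ R : Type*} [CommRing R]

theorem eval_eval₂_X_pow_mul_C (w : σ → ℕ) (a : σ → R) (p : MvPolynomial σ R) (z : R) :
    (p.eval₂ Polynomial.C (fun i => Polynomial.X ^ w i * Polynomial.C (a i))).eval z =
      eval (fun i => z ^ w i * a i) p := by
  rw [← Polynomial.coe_evalRingHom, hom_eval₂]
  congr 1
  · ext; simp
  · ext; simp only [Polynomial.coe_evalRingHom, Polynomial.eval_mul, Polynomial.eval_pow,
      Polynomial.eval_X, Polynomial.eval_C]

theorem finite_setOf_eval_weighted_eq_zero [IsDomain R] {w : σ → ℕ} (hw : ∀ i, 0 < w i)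
    (a : σ → R) {p : MvPolynomial σ R} (hp : eval 0 p ≠ 0) :
    {z : R | eval (fun i => z ^ w i * a i) p = 0}.Finite := by
  set q := p.eval₂ Polynomial.C (fun i => Polynomial.X ^ w i * Polynomial.C (a i))
  have hq_zero : q.eval 0 = eval 0 p := by
    rw [eval_eval₂_X_pow_mul_C]
    congr 2
    funext i
    simp [zero_pow (hw i).ne']
  have hq : q ≠ 0 := fun h => hp (by rw [← hq_zero, h, Polynomial.eval_zero])
  simpa only [Polynomial.IsRoot, eval_eval₂_X_pow_mul_C, q] using
    Polynomial.finite_setOfPred_isRoot hq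

end MvPolynomial

theorem stmt_5_general {N : ℕ} (w : Fin N → ℕ) (hw : ∀ i, 0 < w i)
    (C : Set (Fin N → ℂ)) (hC : IsZariskiClosed C) (h0 : (0 : Fin N → ℂ) ∉ C)
    (w₀ : Fin N → ℂ) :
    {z : ℂˣ | (fun i => (z : ℂ) ^ w i * w₀ i) ∈ C}.Finite := by
  obtain ⟨S, rfl⟩ := hC
  obtain ⟨p, hpS, hp0⟩ : ∃ p ∈ S, MvPolynomial.eval 0 p ≠ 0 := by simpa using h0
  refine ((MvPolynomial.finite_setOf_eval_weighted_eq_zero hw w₀ hp0).preimage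
    Units.val_injective.injOn).subset fun z hz => hz p hpS

/-- let `ℂˣ` act on `ℂ^N` with positive weights `w₁,…,w_N`, i.e.
`z • x = (z^{w₁}x₁,…,z^{w_N}x_N)`. If `C ⊆ ℂ^N` is Zariski closed and `0 ∉ C`, then
for every `w₀` the set `{z ∈ ℂˣ : z • w₀ ∈ C}` is finite. -/
theorem stmt_5 {N : ℕ} (hN : 1 ≤ N) (w : Fin N → ℕ) (hw : ∀ i, 0 < w i)
    (C : Set (Fin N → ℂ)) (hC : IsZariskiClosed C) (h0 : (0 : Fin N → ℂ) ∉ C)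
    (w₀ : Fin N → ℂ) :
    {z : ℂˣ | (fun i => (z : ℂ) ^ w i * w₀ i) ∈ C}.Finite :=
  stmt_5_general w hw C hC h0 w₀
end

section
/- Let n ≥ 1, N ≥ 1, and let ρ : GL_n(ℂ) → GL_N(ℂ) be a group homomorphism such that there exist positive integers w₁,…,w_N with ρ(z·1_n) equal to the diagonal matrix diag(z^{w₁},…,z^{w_N}) for every z ∈ ℂˣ (all weights of the central ℂ* are positive). Let w₀ ∈ ℂ^N be nonzero and suppose the orbit ρ(SL_n(ℂ))·w₀ = {ρ(g)·w₀ : g ∈ SL_n(ℂ)} is Zariski closed in ℂ^N. Then the stabilizer G = {g ∈ SL_n(ℂ) : ρ(g)·w₀ = w₀} has finite index in the stabilizer G̃ = {g ∈ GL_n(ℂ) : ρ(g)·w₀ = w₀}. -/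
/-- let `ρ : GL_n(ℂ) → GL_N(ℂ)` be a homomorphism under which the central
`ℂˣ` acts with positive weights `w₁,…,w_N`, and let `w₀ ≠ 0` be such that the orbit
`ρ(SL_n(ℂ))·w₀` is Zariski closed. Then the stabilizer `G` of `w₀` in `SL_n(ℂ)` has
finite index in the stabilizer `G̃` of `w₀` in `GL_n(ℂ)`. -/
theorem stmt_6 {n N : ℕ} (hn : 1 ≤ n) (hN : 1 ≤ N)
    (ρ : Matrix.GeneralLinearGroup (Fin n) ℂ →* Matrix.GeneralLinearGroup (Fin N) ℂ)
    (w : Fin N → ℕ) (hw : ∀ i, 0 < w i)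
    (hcentral : ∀ (z : ℂˣ) (g : Matrix.GeneralLinearGroup (Fin n) ℂ),
      (↑g : Matrix (Fin n) (Fin n) ℂ) = (z : ℂ) • (1 : Matrix (Fin n) (Fin n) ℂ) →
      (↑(ρ g) : Matrix (Fin N) (Fin N) ℂ) = Matrix.diagonal fun i => (z : ℂ) ^ w i)
    (w₀ : Fin N → ℂ) (hw₀ : w₀ ≠ 0)
    (hclosed : IsZariskiClosed
      {x | ∃ g : Matrix.GeneralLinearGroup (Fin n) ℂ,
        (↑g : Matrix (Fin n) (Fin n) ℂ).det = 1 ∧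
          x = (↑(ρ g) : Matrix (Fin N) (Fin N) ℂ).mulVec w₀})
    (Gt G : Subgroup (Matrix.GeneralLinearGroup (Fin n) ℂ))
    (hGt : ∀ g, g ∈ Gt ↔ (↑(ρ g) : Matrix (Fin N) (Fin N) ℂ).mulVec w₀ = w₀)
    (hG : ∀ g, g ∈ G ↔ ((↑g : Matrix (Fin n) (Fin n) ℂ).det = 1 ∧
      (↑(ρ g) : Matrix (Fin N) (Fin N) ℂ).mulVec w₀ = w₀)) :
    G.relIndex Gt ≠ 0 := by
  classical
  set Orb : Set (Fin N → ℂ) :=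
    {x | ∃ g : Matrix.GeneralLinearGroup (Fin n) ℂ,
        (↑g : Matrix (Fin n) (Fin n) ℂ).det = 1 ∧
          x = (↑(ρ g) : Matrix (Fin N) (Fin N) ℂ).mulVec w₀} with hOrb
  -- 0 ∉ Orb
  have h0Orb : (0 : Fin N → ℂ) ∉ Orb := by
    rintro ⟨g, -, hg⟩
    apply hw₀
    have : (↑((ρ g)⁻¹ * ρ g) : Matrix (Fin N) (Fin N) ℂ).mulVec w₀ = 0 := by
      rw [Units.val_mul, ← Matrix.mulVec_mulVec, ← hg, Matrix.mulVec_zero]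
    rwa [inv_mul_cancel, Units.val_one, Matrix.one_mulVec] at this
  set ψ : Gt →* ℂˣ := (Matrix.GeneralLinearGroup.det).comp Gt.subtype with hψ
  have hker : ψ.ker = G.subgroupOf Gt := by
    ext g
    simp only [MonoidHom.mem_ker, Subgroup.mem_subgroupOf, hG, hψ, MonoidHom.comp_apply,
      Subgroup.coe_subtype]
    constructor
    · intro h
      refine ⟨?_, (hGt _).1 g.2⟩
      have := congrArg Units.val h
      rwa [Matrix.GeneralLinearGroup.val_det_apply, Units.val_one] at this
    · rintro ⟨h, -⟩
      ext
      rwa [Matrix.GeneralLinearGroup.val_det_apply, Units.val_one]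
  have hrel : G.relIndex Gt = Nat.card ψ.range := by
    rw [Subgroup.relIndex, ← hker, Subgroup.index_ker]
  rw [hrel, Nat.card_ne_zero]
  refine ⟨⟨1, ⟨1, map_one ψ⟩⟩, ?_⟩
  by_contra hfin
  rw [not_finite_iff_infinite] at hfin
  -- for each d in range, build u with the curve point in Orb
  have key : ∀ d : ψ.range, ∃ u : ℂ, (u ^ n)⁻¹ = (d : ℂˣ) ∧
      (fun i => w₀ i * u ^ w i) ∈ Orb := by
    rintro ⟨d, g, hg⟩
    obtain ⟨z, hz⟩ := IsAlgClosed.exists_pow_nat_eq (k := ℂ) (d : ℂ) (n := n) hn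
    have hzne : z ≠ 0 := by
      intro h
      apply d.ne_zero
      rw [← hz, h, zero_pow (by omega)]
    refine ⟨z⁻¹, ?_, ?_⟩
    · rw [inv_pow, inv_inv, hz]
    · -- scalar matrix as a unit
      have hmul1 : (z • (1 : Matrix (Fin n) (Fin n) ℂ)) * (z⁻¹ • 1) = 1 := by
        rw [smul_mul_smul_comm, one_mul, mul_inv_cancel₀ hzne, one_smul]
      have hmul2 : (z⁻¹ • (1 : Matrix (Fin n) (Fin n) ℂ)) * (z • 1) = 1 := by
        rw [smul_mul_smul_comm, one_mul, inv_mul_cancel₀ hzne, one_smul]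
      set cz : Matrix.GeneralLinearGroup (Fin n) ℂ :=
        ⟨z • 1, z⁻¹ • 1, hmul1, hmul2⟩ with hcz
      have hczinv : (↑(cz⁻¹) : Matrix (Fin n) (Fin n) ℂ)
          = ((Units.mk0 z hzne)⁻¹ : ℂˣ) • (1 : Matrix (Fin n) (Fin n) ℂ) := by
        simp [hcz, Units.smul_def]
      have hρcz := hcentral (Units.mk0 z hzne)⁻¹ cz⁻¹ hczinv
      refine ⟨cz⁻¹ * (g : Matrix.GeneralLinearGroup (Fin n) ℂ), ?_, ?_⟩
      · have hdetg : (↑(g : Matrix.GeneralLinearGroup (Fin n) ℂ)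
            : Matrix (Fin n) (Fin n) ℂ).det = (d : ℂ) := by
          rw [← Matrix.GeneralLinearGroup.val_det_apply]
          exact congrArg Units.val hg
        rw [Units.val_mul, Matrix.det_mul, hdetg]
        have : (↑(cz⁻¹) : Matrix (Fin n) (Fin n) ℂ).det = (z⁻¹) ^ n := by
          rw [hczinv]
          simp [Matrix.det_smul, Units.smul_def]
        rw [this, inv_pow, hz]
        exact inv_mul_cancel₀ d.ne_zero
      · have hgfix : (↑(ρ (g : Matrix.GeneralLinearGroup (Fin n) ℂ))
            : Matrix (Fin N) (Fin N) ℂ).mulVec w₀ = w₀ := (hGt _).1 g.2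
        rw [map_mul, Units.val_mul, ← Matrix.mulVec_mulVec, hgfix, hρcz]
        funext i
        rw [Matrix.mulVec_diagonal]
        simp [mul_comm, inv_pow]
  choose F hF1 hF2 using key
  have hFinj : Function.Injective F := by
    intro a b hab
    have : ((a : ℂˣ) : ℂ) = ((b : ℂˣ) : ℂ) := by rw [← hF1 a, ← hF1 b, hab]
    exact Subtype.ext (Units.ext this)
  have hAinf : {u : ℂ | (fun i => w₀ i * u ^ w i) ∈ Orb}.Infinite :=
    Set.infinite_of_injective_forall_mem hFinj hF2
  -- polynomial argument
  obtain ⟨S, hS⟩ := hclosed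
  apply h0Orb
  rw [hS]
  intro p hp
  set q : Polynomial ℂ :=
    MvPolynomial.aeval (fun i => Polynomial.C (w₀ i) * Polynomial.X ^ w i) p with hq
  have hqeval : ∀ u : ℂ, q.eval u = MvPolynomial.eval (fun i => w₀ i * u ^ w i) p := by
    intro u
    have := congrFun (congrArg DFunLike.coe
      (MvPolynomial.comp_aeval (R := ℂ)
        (fun i => Polynomial.C (w₀ i) * Polynomial.X ^ w i) (Polynomial.aeval u))) p
    simp only [AlgHom.comp_apply, map_mul, map_pow, Polynomial.aeval_C,
      Polynomial.aeval_X, Algebra.algebraMap_self, RingHom.id_apply] at this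
    exact this
  have hq0 : q = 0 := by
    apply Polynomial.eq_zero_of_infinite_isRoot
    apply hAinf.mono
    intro u hu
    have : (fun i => w₀ i * u ^ w i) ∈ {x | ∀ p ∈ S, MvPolynomial.eval x p = 0} := by
      rw [← hS]; exact hu
    simpa [Polynomial.IsRoot, hqeval u] using this p hp
  have := hqeval 0
  rw [hq0] at this
  simp only [Polynomial.eval_zero] at this
  have h00 : (fun i => w₀ i * (0:ℂ) ^ w i) = (0 : Fin N → ℂ) := by
    funext i
    rw [zero_pow (hw i).ne', mul_zero]
    rfl
  rw [h00] at this
  exact this.symm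
end

section
/- Let Γ be a group acting on a set W, let N and Z be subgroups of Γ such that every element of Γ can be written as a product n·z with n ∈ N and z ∈ Z, and let w₀ ∈ W. If the set F = {z ∈ Z : z • w₀ ∈ N • w₀} is finite, then the subgroup N ∩ Stab_Γ(w₀) has index at most |F| in the stabilizer Stab_Γ(w₀) = {γ ∈ Γ : γ • w₀ = w₀}; in particular this index is finite. -/
/-- let `Γ` act on `W`, let `N, Z ≤ Γ` with `Γ = N·Z`, and `w₀ ∈ W`.
If `F = {z ∈ Z : z • w₀ ∈ N • w₀}` is finite, then `N ∩ Stab_Γ(w₀)` has index at most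
`|F|` in `Stab_Γ(w₀)`; in particular this index is finite. -/
theorem stmt_8 {Γ W : Type*} [Group Γ] [MulAction Γ W]
    (N Z : Subgroup Γ)
    (hNZ : ∀ γ : Γ, ∃ n ∈ N, ∃ z ∈ Z, γ = n * z)
    (w₀ : W) (F : Set Γ)
    (hF : F = {z : Γ | z ∈ Z ∧ ∃ n ∈ N, z • w₀ = n • w₀})
    (hfin : F.Finite) :
    N.relIndex (MulAction.stabilizer Γ w₀) ≠ 0 ∧
      N.relIndex (MulAction.stabilizer Γ w₀) ≤ F.ncard := by
  set S := MulAction.stabilizer Γ w₀ with hS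
  set H := N.subgroupOf S with hH
  have key : ∀ s : S, ∃ z : F, ∃ n ∈ N, ((s : Γ))⁻¹ = n * (z : Γ) := by
    intro s
    obtain ⟨n, hn, z, hz, hnz⟩ := hNZ ((s : Γ))⁻¹
    have hzF : z ∈ F := by
      rw [hF]
      refine ⟨hz, n⁻¹, inv_mem hn, ?_⟩
      have hzz : z = n⁻¹ * (s : Γ)⁻¹ := by rw [hnz]; group
      have hsinv : (s : Γ)⁻¹ • w₀ = w₀ := by
        rw [inv_smul_eq_iff]; exact s.2.symm
      rw [hzz, mul_smul, hsinv]
    exact ⟨⟨z, hzF⟩, n, hn, hnz⟩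
  choose f n hn hfn using key
  have hf : ∀ s s' : S, f s = f s' → (s : S ⧸ H) = (s' : S ⧸ H) := by
    intro s s' hfe
    rw [QuotientGroup.eq]
    have : ((s⁻¹ * s' : S) : Γ) ∈ N := by
      have h1 : (s : Γ)⁻¹ = n s * (f s : Γ) := hfn s
      have h2 : (s' : Γ)⁻¹ = n s' * (f s' : Γ) := hfn s'
      have : ((s⁻¹ * s' : S) : Γ) = n s * (n s')⁻¹ := by
        push_cast
        rw [h1]
        have : (s' : Γ) = (f s' : Γ)⁻¹ * (n s')⁻¹ := by
          have h3 := congrArg (·⁻¹) h2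
          simpa [mul_inv_rev] using h3
        rw [this, hfe]
        group
      rw [this]
      exact mul_mem (hn s) (inv_mem (hn s'))
    exact this
  have hinj : Function.Injective (fun q : S ⧸ H => f q.out) := by
    intro q q' he
    have := hf q.out q'.out he
    rwa [QuotientGroup.out_eq', QuotientGroup.out_eq'] at this
  have : Finite F := hfin.to_subtype
  have hfinQ : Finite (S ⧸ H) := Finite.of_injective _ hinj
  have hle : Nat.card (S ⧸ H) ≤ Nat.card F := Nat.card_le_card_of_injective _ hinj
  have hcard : N.relIndex S = Nat.card (S ⧸ H) := rfl
  constructor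
  · rw [hcard]
    have : Nonempty (S ⧸ H) := ⟨(1 : S)⟩
    exact Nat.card_ne_zero.mpr ⟨this, hfinQ⟩
  · rw [hcard, ← Nat.card_coe_set_eq]
    exact hle
end
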